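/- arXiv:2501.08746 — 3 statements merged into one kernel-verified Lean document; each statement's English description precedes it below -/
import Mathlib

section
/- Let v₀, w_{m₀}, L₀ be real numbers with v₀ > w_{m₀} > 0 and L₀ ≥ 0, and let γ* > 0 be the unique positive real number satisfying v₀·exp(−(γ*)²) = L₀·(γ*)² + w_{m₀}. Define s(t) := 2·γ*·√t for t ≥ 0 and, for 0 ≤ z ≤ s(t), t > 0, w(z,t) := 2·v₀·√t·exp(−z²/(4t)) + v₀·z·√π·erf(z/(2√t)) − L₀·z·γ* − v₀·z·√π·erf(γ*). Then for all t > 0: (i) ∂²w/∂z²(z,t) = ∂w/∂t(z,t) for all 0 < z < s(t); (ii) ∂w/∂z(s(t),t) = −L₀·√t·s'(t); (iii) w(s(t),t) = 2·w_{m₀}·√t; (iv) w(0,t) = 2·v₀·√t; and (v) s(0) = 0. -/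
open Real MeasureTheory Set

noncomputable section

/-- The error function `erf x = (2/√π) ∫₀ˣ exp(−u²) du`. -/
def erf (x : ℝ) : ℝ := (2 / Real.sqrt π) * ∫ u in (0:ℝ)..x, Real.exp (-u ^ 2)

/-- Partial derivative in the first (space) variable. -/
def pz (f : ℝ → ℝ → ℝ) (z t : ℝ) : ℝ := deriv (fun z' => f z' t) z

/-- Partial derivative in the second (time) variable. -/
def pt (f : ℝ → ℝ → ℝ) (z t : ℝ) : ℝ := deriv (fun t' => f z t') t

/-- Second partial derivative in the first (space) variable. -/
def pzz (f : ℝ → ℝ → ℝ) (z t : ℝ) : ℝ := deriv (fun z' => pz f z' t) z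

/-! Both building blocks `√t · exp (-z²/(4t)) + (z/2) √π erf (z/(2√t))` and `z` of the profile
solve the heat equation: for the first, `∂z` gives `(√π/2) erf (z/(2√t))`, and `∂zz` and `∂t` both
equal `exp (-z²/(4t)) / (2√t)`. On the front `z = 2γ√t` the similarity variable `z/(2√t)` is `γ`,
so the two `erf` terms cancel and both free-boundary conditions reduce to the equation
defining `γ`. -/

lemma hasDerivAt_erf (x : ℝ) : HasDerivAt erf (2 / √π * exp (-x ^ 2)) x :=
  ((continuous_exp.comp (continuous_pow 2).neg).integral_hasStrictDerivAt 0 x).hasDerivAt.const_mul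
    (2 / √π)

lemma erf_zero : erf 0 = 0 := by simp [erf]

lemma div_two_sqrt_sq (z : ℝ) {t : ℝ} (ht : 0 ≤ t) : (z / (2 * √t)) ^ 2 = z ^ 2 / (4 * t) := by
  rw [div_pow, mul_pow, sq_sqrt ht]
  norm_num

lemma two_mul_mul_sqrt_div_two_mul_sqrt (γ : ℝ) {t : ℝ} (ht : 0 < t) :
    2 * γ * √t / (2 * √t) = γ := by
  have hst : √t ≠ 0 := (sqrt_pos.2 ht).ne'
  field_simp

section Congr

variable {f g : ℝ → ℝ → ℝ} {z t : ℝ}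

lemma pz_congr (h : ∀ z, f z t = g z t) : pz f z t = pz g z t := by
  simp only [pz, h]

lemma pzz_congr (h : ∀ z, f z t = g z t) : pzz f z t = pzz g z t := by
  simp only [pzz, pz_congr h]

lemma pt_congr_of_pos (h : ∀ t > 0, ∀ z, f z t = g z t) (ht : 0 < t) :
    pt f z t = pt g z t :=
  Filter.EventuallyEq.deriv_eq <| by
    filter_upwards [Ioi_mem_nhds ht] with t' ht' using h t' ht' z

end Congr

section SimilaritySolution

variable (v₀ L₀ γ : ℝ)

def similaritySolution (z t : ℝ) : ℝ :=
  2 * v₀ * √t * exp (-z ^ 2 / (4 * t)) + v₀ * z * √π * erf (z / (2 * √t)) -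
    L₀ * z * γ - v₀ * z * √π * erf γ

variable {v₀ L₀ γ} {t : ℝ}

lemma hasDerivAt_erf_div_two_sqrt (ht : 0 < t) (z : ℝ) :
    HasDerivAt (fun z' => erf (z' / (2 * √t))) (exp (-z ^ 2 / (4 * t)) / (√π * √t)) z := by
  have hst : √t ≠ 0 := (sqrt_pos.2 ht).ne'
  refine ((hasDerivAt_erf _).comp z ((hasDerivAt_id z).div_const (2 * √t))).congr_deriv ?_
  rw [id, neg_div, div_two_sqrt_sq z ht.le]
  field_simp

lemma hasDerivAt_similaritySolution_z (ht : 0 < t) (z : ℝ) :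
    HasDerivAt (fun z' => similaritySolution v₀ L₀ γ z' t)
      (v₀ * √π * erf (z / (2 * √t)) - L₀ * γ - v₀ * √π * erf γ) z := by
  have hst : √t ≠ 0 := (sqrt_pos.2 ht).ne'
  have hpi : √π ≠ 0 := (sqrt_pos.2 pi_pos).ne'
  have hgauss : HasDerivAt (fun z' => exp (-z' ^ 2 / (4 * t)))
      (exp (-z ^ 2 / (4 * t)) * (-(2 * z) / (4 * t))) z := by
    simpa using ((hasDerivAt_pow 2 z).neg.div_const (4 * t)).exp
  have hlin : HasDerivAt (fun z' => v₀ * z' * √π) (v₀ * √π) z := by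
    simpa using ((hasDerivAt_id z).const_mul v₀).mul_const √π
  refine ((((hgauss.const_mul (2 * v₀ * √t)).add
    (hlin.mul (hasDerivAt_erf_div_two_sqrt ht z))).sub
    (((hasDerivAt_id z).const_mul L₀).mul_const γ)).sub (hlin.mul_const (erf γ))).congr_deriv ?_
  field_simp
  rw [sq_sqrt ht.le]
  ring

lemma pz_similaritySolution (ht : 0 < t) (z : ℝ) :
    pz (similaritySolution v₀ L₀ γ) z t =
      v₀ * √π * erf (z / (2 * √t)) - L₀ * γ - v₀ * √π * erf γ :=
  (hasDerivAt_similaritySolution_z ht z).deriv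

lemma pzz_similaritySolution (ht : 0 < t) (z : ℝ) :
    pzz (similaritySolution v₀ L₀ γ) z t = v₀ * exp (-z ^ 2 / (4 * t)) / √t := by
  have hpi : √π ≠ 0 := (sqrt_pos.2 pi_pos).ne'
  rw [pzz, funext (pz_similaritySolution ht),
    ((((hasDerivAt_erf_div_two_sqrt ht z).const_mul (v₀ * √π)).sub_const (L₀ * γ)).sub_const
      (v₀ * √π * erf γ)).deriv]
  field_simp

lemma pt_similaritySolution (ht : 0 < t) (z : ℝ) :
    pt (similaritySolution v₀ L₀ γ) z t = v₀ * exp (-z ^ 2 / (4 * t)) / √t := by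
  have hst : √t ≠ 0 := (sqrt_pos.2 ht).ne'
  have hpi : √π ≠ 0 := (sqrt_pos.2 pi_pos).ne'
  have hsqrt := hasDerivAt_sqrt ht.ne'
  have hgauss := ((hasDerivAt_const t (-z ^ 2)).div ((hasDerivAt_id t).const_mul 4)
    (by simp [ht.ne'])).exp
  have harg := (hasDerivAt_const t z).div (hsqrt.const_mul 2) (by simp [hst])
  refine HasDerivAt.deriv (((((hsqrt.const_mul (2 * v₀)).mul hgauss).add
    (((hasDerivAt_erf _).comp t harg).const_mul (v₀ * z * √π))).sub_const (L₀ * z * γ)).sub_const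
      (v₀ * z * √π * erf γ) |>.congr_deriv ?_)
  simp only [id, Pi.div_apply, neg_div, div_two_sqrt_sq z ht.le]
  field_simp
  rw [sq_sqrt ht.le]
  ring

lemma pz_similaritySolution_front (ht : 0 < t) :
    pz (similaritySolution v₀ L₀ γ) (2 * γ * √t) t = -L₀ * γ := by
  rw [pz_similaritySolution ht, two_mul_mul_sqrt_div_two_mul_sqrt γ ht]
  ring

lemma similaritySolution_front (ht : 0 < t) :
    similaritySolution v₀ L₀ γ (2 * γ * √t) t = 2 * √t * (v₀ * exp (-γ ^ 2) - L₀ * γ ^ 2) := by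
  have hexp : -(2 * γ * √t) ^ 2 / (4 * t) = -γ ^ 2 := by
    rw [mul_pow, mul_pow, sq_sqrt ht.le]
    field_simp
    ring
  rw [similaritySolution, two_mul_mul_sqrt_div_two_mul_sqrt γ ht, hexp]
  ring

lemma similaritySolution_zero (t : ℝ) :
    similaritySolution v₀ L₀ γ 0 t = 2 * v₀ * √t := by
  simp [similaritySolution, erf_zero]

end SimilaritySolution

theorem statement10_general (v₀ wm₀ L₀ : ℝ)
    (γ : ℝ)
    (hγ : v₀ * Real.exp (-γ ^ 2) = L₀ * γ ^ 2 + wm₀)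
    (s : ℝ → ℝ) (hs : ∀ t, s t = 2 * γ * Real.sqrt t)
    (w : ℝ → ℝ → ℝ)
    (hw : ∀ t > 0, ∀ z : ℝ,
      w z t = 2 * v₀ * Real.sqrt t * Real.exp (-z ^ 2 / (4 * t)) +
        v₀ * z * Real.sqrt π * erf (z / (2 * Real.sqrt t)) -
        L₀ * z * γ - v₀ * z * Real.sqrt π * erf γ) :
    (∀ t > 0,
      (∀ z, 0 < z → z < s t → pzz w z t = pt w z t) ∧
      pz w (s t) t = -L₀ * Real.sqrt t * deriv s t ∧
      w (s t) t = 2 * wm₀ * Real.sqrt t ∧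
      w 0 t = 2 * v₀ * Real.sqrt t) ∧
    s 0 = 0 := by
  have hw' : ∀ t > 0, ∀ z, w z t = similaritySolution v₀ L₀ γ z t := hw
  refine ⟨fun t ht => ⟨fun z _ _ => ?heat, ?stefan, ?front, ?origin⟩, by simp [hs]⟩
  case heat =>
    rw [pzz_congr (hw' t ht), pt_congr_of_pos hw' ht, pzz_similaritySolution ht,
      pt_similaritySolution ht]
  case stefan =>
    have hst : √t ≠ 0 := (sqrt_pos.2 ht).ne'
    have hds : deriv s t = γ / √t := by
      rw [show s = fun t => 2 * γ * √t from funext hs,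
        ((hasDerivAt_sqrt ht.ne').const_mul (2 * γ)).deriv]
      field_simp
    rw [pz_congr (hw' t ht), hs, pz_similaritySolution_front ht, hds]
    field_simp
  case front =>
    rw [hw' t ht, hs, similaritySolution_front ht, hγ]
    ring
  case origin => rw [hw' t ht, similaritySolution_zero]

/-- the explicit similarity solution of the Stefan problem with
Dirichlet condition. -/
theorem statement10 (v₀ wm₀ L₀ : ℝ) (h1 : wm₀ < v₀) (h2 : 0 < wm₀) (h3 : 0 ≤ L₀)
    (γ : ℝ) (hγ_pos : 0 < γ)
    (hγ : v₀ * Real.exp (-γ ^ 2) = L₀ * γ ^ 2 + wm₀)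
    (hγ_uniq : ∀ γ' : ℝ, 0 < γ' → v₀ * Real.exp (-γ' ^ 2) = L₀ * γ' ^ 2 + wm₀ → γ' = γ)
    (s : ℝ → ℝ) (hs : ∀ t, s t = 2 * γ * Real.sqrt t)
    (w : ℝ → ℝ → ℝ)
    (hw : ∀ t > 0, ∀ z : ℝ,
      w z t = 2 * v₀ * Real.sqrt t * Real.exp (-z ^ 2 / (4 * t)) +
        v₀ * z * Real.sqrt π * erf (z / (2 * Real.sqrt t)) -
        L₀ * z * γ - v₀ * z * Real.sqrt π * erf γ) :
    (∀ t > 0,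
      (∀ z, 0 < z → z < s t → pzz w z t = pt w z t) ∧
      pz w (s t) t = -L₀ * Real.sqrt t * deriv s t ∧
      w (s t) t = 2 * wm₀ * Real.sqrt t ∧
      w 0 t = 2 * v₀ * Real.sqrt t) ∧
    s 0 = 0 :=
  statement10_general v₀ wm₀ L₀ γ hγ s hs w hw

end
end

section
/- Let m ≠ 0 and α, β be real numbers. Let Ψ : ℝ × ℝ → ℝ be smooth and nonvanishing and satisfy ∂Ψ/∂t = (1/2)·[∂³(Ψ⁻²)/∂x³ − ∂(Ψ⁻²)/∂x] + α·e^{m·x} + β·e^{−m·x} everywhere. Let y : ℝ × ℝ → ℝ be smooth with ∂y/∂x(x,t) = Ψ(x,t) and ∂y/∂t(x,t) = (1/2)·[∂²(Ψ⁻²)/∂x²(x,t) − Ψ(x,t)⁻²] + (α/m)·e^{m·x} − (β/m)·e^{−m·x} for all (x,t), and let X : ℝ × ℝ → ℝ be smooth with X(y(x,t), t) = x for all (x,t). Then at every point (η, t) with η = y(x,t) for some x, X satisfies ∂X/∂t = −∂³X/∂y³ + (1/2)·(∂X/∂y)³ − (∂X/∂y)·[(α/m)·e^{m·X} − (β/m)·e^{−m·X}];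 consequently the function Z(y,t) := X(y, −t) satisfies the modified-modified-KdV-type equation ∂Z/∂t = ∂³Z/∂y³ − (1/2)·(∂Z/∂y)³ + (∂Z/∂y)·[(α/m)·e^{m·Z} − (β/m)·e^{−m·Z}] at the corresponding points. -/
open Real

noncomputable section

/-- Third partial derivative in the first variable. -/
def pzzz (f : ℝ → ℝ → ℝ) (z t : ℝ) : ℝ := deriv (fun z' => pzz f z' t) z

/-- the reciprocal reduction of the third-order evolution equation
with exponential source terms to an m²KdV-type equation. -/
theorem statement14 (m α β : ℝ) (hm : m ≠ 0)
    (Ψ : ℝ → ℝ → ℝ) (hΨ_smooth : ContDiff ℝ (⊤ : ℕ∞) (fun p : ℝ × ℝ => Ψ p.1 p.2))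
    (hΨ_ne : ∀ x t, Ψ x t ≠ 0)
    (hΨ_eq : ∀ x t, pt Ψ x t =
      (1 / 2) * (pzzz (fun x' t' => ((Ψ x' t') ^ 2)⁻¹) x t -
        pz (fun x' t' => ((Ψ x' t') ^ 2)⁻¹) x t) +
      α * Real.exp (m * x) + β * Real.exp (-(m * x)))
    (y : ℝ → ℝ → ℝ) (hy_smooth : ContDiff ℝ (⊤ : ℕ∞) (fun p : ℝ × ℝ => y p.1 p.2))
    (hy_x : ∀ x t, pz y x t = Ψ x t)
    (hy_t : ∀ x t, pt y x t =
      (1 / 2) * (pzz (fun x' t' => ((Ψ x' t') ^ 2)⁻¹) x t - ((Ψ x t) ^ 2)⁻¹) +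
      (α / m) * Real.exp (m * x) - (β / m) * Real.exp (-(m * x)))
    (X : ℝ → ℝ → ℝ) (hX_smooth : ContDiff ℝ (⊤ : ℕ∞) (fun p : ℝ × ℝ => X p.1 p.2))
    (hX : ∀ x t, X (y x t) t = x) :
    (∀ x t, pt X (y x t) t =
      -(pzzz X (y x t) t) + (1 / 2) * (pz X (y x t) t) ^ 3 -
        pz X (y x t) t *
          ((α / m) * Real.exp (m * X (y x t) t) -
            (β / m) * Real.exp (-(m * X (y x t) t)))) ∧
    (∀ x t, pt (fun y' t' => X y' (-t')) (y x (-t)) t =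
      pzzz (fun y' t' => X y' (-t')) (y x (-t)) t -
        (1 / 2) * (pz (fun y' t' => X y' (-t')) (y x (-t)) t) ^ 3 +
        pz (fun y' t' => X y' (-t')) (y x (-t)) t *
          ((α / m) * Real.exp (m * (fun y' t' => X y' (-t')) (y x (-t)) t) -
            (β / m) * Real.exp (-(m * (fun y' t' => X y' (-t')) (y x (-t)) t)))) := by
  have main : ∀ x t, pt X (y x t) t =
      -(pzzz X (y x t) t) + (1 / 2) * (pz X (y x t) t) ^ 3 -
        pz X (y x t) t *
          ((α / m) * Real.exp (m * X (y x t) t) -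
            (β / m) * Real.exp (-(m * X (y x t) t))) := by
    intro x t
    -- slices
    have hgs : ContDiff ℝ (⊤ : ℕ∞) (fun η => X η t) :=
      hX_smooth.comp (contDiff_id.prodMk contDiff_const)
    have hfs : ContDiff ℝ (⊤ : ℕ∞) (fun x' => y x' t) :=
      hy_smooth.comp (contDiff_id.prodMk contDiff_const)
    have hψs : ContDiff ℝ (⊤ : ℕ∞) (fun x' => Ψ x' t) :=
      hΨ_smooth.comp (contDiff_id.prodMk contDiff_const)
    have hgs1 : ContDiff ℝ (⊤ : ℕ∞) (deriv (fun η => X η t)) :=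
      (contDiff_infty_iff_deriv.mp (hgs.of_le (by simp))).2
    have hgs2 : ContDiff ℝ (⊤ : ℕ∞) (deriv (deriv (fun η => X η t))) :=
      (contDiff_infty_iff_deriv.mp hgs1).2
    have hψinv : ContDiff ℝ (⊤ : ℕ∞) (fun x' => (Ψ x' t)⁻¹) := hψs.inv (fun z => hΨ_ne z t)
    have hinv2 : ContDiff ℝ (⊤ : ℕ∞) (fun w => ((Ψ w t) ^ 2)⁻¹) :=
      (hψs.pow 2).inv (fun z => pow_ne_zero 2 (hΨ_ne z t))
    have hinv2' : ContDiff ℝ (⊤ : ℕ∞) (deriv (fun w => ((Ψ w t) ^ 2)⁻¹)) :=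
      (contDiff_infty_iff_deriv.mp (hinv2.of_le (by simp))).2
    have hdf : ∀ x', deriv (fun x'' => y x'' t) x' = Ψ x' t := fun x' => hy_x x' t
    -- step 1 : pz X (y x' t) t = (Ψ x' t)⁻¹
    have h1 : ∀ x', deriv (fun η => X η t) (y x' t) = (Ψ x' t)⁻¹ := by
      intro x'
      have hc := deriv_comp (x := x') (hgs.differentiable (by simp) (y x' t))
        (hfs.differentiable (by simp) x')
      have hid : ((fun η => X η t) ∘ fun x'' => y x'' t) = id := funext fun x'' => hX x'' t
      rw [hid, deriv_id, hdf] at hc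
      exact eq_inv_of_mul_eq_one_left hc.symm
    -- step 2 : pzz X (y x' t) t = (1/2) * deriv (Ψ⁻²)
    have h2 : ∀ x', deriv (deriv (fun η => X η t)) (y x' t) =
        (1 / 2) * deriv (fun w => ((Ψ w t) ^ 2)⁻¹) x' := by
      intro x'
      have hc := deriv_comp (x := x') (hgs1.differentiable (by simp) (y x' t))
        (hfs.differentiable (by simp) x')
      have hcompeq : (deriv (fun η => X η t)) ∘ (fun x'' => y x'' t)
          = fun x'' => (Ψ x'' t)⁻¹ := funext fun x'' => h1 x''
      rw [hcompeq, hdf] at hc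
      have hsq : deriv (fun w => ((Ψ w t) ^ 2)⁻¹) x'
          = 2 * (Ψ x' t)⁻¹ ^ 1 * deriv (fun w => (Ψ w t)⁻¹) x' := by
        have heq : (fun w => ((Ψ w t) ^ 2)⁻¹) = fun w => ((Ψ w t)⁻¹) ^ 2 := by
          funext w; rw [inv_pow]
        rw [heq]
        exact (((hψinv.differentiable (by simp) x').hasDerivAt).pow 2).deriv
      have hne := hΨ_ne x' t
      rw [hsq, hc, pow_one]
      field_simp
    -- step 3 : pzzz X (y x t) t * Ψ x t = (1/2) * pzz (Ψ⁻²)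
    have h3 : deriv (deriv (deriv (fun η => X η t))) (y x t) * Ψ x t =
        (1 / 2) * deriv (deriv (fun w => ((Ψ w t) ^ 2)⁻¹)) x := by
      have hc := deriv_comp (x := x) (hgs2.differentiable (by simp) (y x t))
        (hfs.differentiable (by simp) x)
      have hcompeq : (deriv (deriv (fun η => X η t))) ∘ (fun x'' => y x'' t)
          = fun x'' => (1 / 2) * deriv (fun w => ((Ψ w t) ^ 2)⁻¹) x'' :=
        funext fun x'' => h2 x''
      rw [hcompeq, hdf] at hc
      rw [deriv_const_mul _ (hinv2'.differentiable (by simp) x)] at hc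
      linarith [hc]
    -- step 4 : pt X (y x t) t = - pt y x t * pz X (y x t) t
    have h4 : pt X (y x t) t = -(pt y x t) * (Ψ x t)⁻¹ := by
      have hyt_slice : HasDerivAt (fun t' => y x t') (pt y x t) t :=
        ((hy_smooth.comp (contDiff_const.prodMk contDiff_id)).differentiable (by simp) t).hasDerivAt
      have hcurve : HasDerivAt (fun t' => ((y x t', t') : ℝ × ℝ)) (pt y x t, 1) t :=
        hyt_slice.prodMk (hasDerivAt_id t)
      have hXF : HasFDerivAt (fun p : ℝ × ℝ => X p.1 p.2)
          (fderiv ℝ (fun p : ℝ × ℝ => X p.1 p.2) (y x t, t)) (y x t, t) :=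
        (hX_smooth.differentiable (by simp) (y x t, t)).hasFDerivAt
      have hF : HasDerivAt (fun t' => X (y x t') t')
          (fderiv ℝ (fun p : ℝ × ℝ => X p.1 p.2) (y x t, t) (pt y x t, 1)) t := by
        simpa [Function.comp_def] using hXF.comp_hasDerivAt_of_eq t hcurve rfl
      have hzero : fderiv ℝ (fun p : ℝ × ℝ => X p.1 p.2) (y x t, t) (pt y x t, 1) = 0 := by
        have hconst : (fun t' => X (y x t') t') = fun _ => x := funext fun t' => hX x t'
        rw [hconst] at hF
        exact (hF.unique (hasDerivAt_const t x))
      -- decompose the fderiv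
      have hpz : HasDerivAt (fun z => X z t)
          (fderiv ℝ (fun p : ℝ × ℝ => X p.1 p.2) (y x t, t) (1, 0)) (y x t) := by
        simpa [Function.comp_def] using
          hXF.comp_hasDerivAt_of_eq (y x t) ((hasDerivAt_id (y x t)).prodMk (hasDerivAt_const (y x t) t)) rfl
      have hpt : HasDerivAt (fun t' => X (y x t) t')
          (fderiv ℝ (fun p : ℝ × ℝ => X p.1 p.2) (y x t, t) (0, 1)) t := by
        simpa [Function.comp_def] using
          hXF.comp_hasDerivAt_of_eq t ((hasDerivAt_const t (y x t)).prodMk (hasDerivAt_id t)) rfl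
      have hsplit : ((pt y x t, 1) : ℝ × ℝ) = (pt y x t) • (1, 0) + (1 : ℝ) • (0, 1) := by
        simp [Prod.ext_iff]
      rw [hsplit, ContinuousLinearMap.map_add, ContinuousLinearMap.map_smul,
        ContinuousLinearMap.map_smul] at hzero
      have e1 : fderiv ℝ (fun p : ℝ × ℝ => X p.1 p.2) (y x t, t) (1, 0)
          = deriv (fun z => X z t) (y x t) := hpz.deriv.symm
      have e2 : fderiv ℝ (fun p : ℝ × ℝ => X p.1 p.2) (y x t, t) (0, 1)
          = deriv (fun t' => X (y x t) t') t := hpt.deriv.symm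
      rw [e1, e2] at hzero
      have hz : pt y x t * deriv (fun z => X z t) (y x t)
          + deriv (fun t' => X (y x t) t') t = 0 := by
        simpa [smul_eq_mul] using hzero
      show deriv (fun t' => X (y x t) t') t = _
      rw [h1 x] at hz
      have hne := hΨ_ne x t
      field_simp at hz ⊢
      linarith
    -- assemble
    have hne := hΨ_ne x t
    have hpzX : pz X (y x t) t = (Ψ x t)⁻¹ := h1 x
    have hpzzzX : pzzz X (y x t) t * Ψ x t
        = (1 / 2) * pzz (fun x' t' => ((Ψ x' t') ^ 2)⁻¹) x t := by
      have : pzzz X (y x t) t = deriv (deriv (deriv (fun η => X η t))) (y x t) := by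
        simp only [pzzz, pzz, pz]
      rw [this]
      have : pzz (fun x' t' => ((Ψ x' t') ^ 2)⁻¹) x t
          = deriv (deriv (fun w => ((Ψ w t) ^ 2)⁻¹)) x := by
        simp only [pzz, pz]
      rw [this]
      exact h3
    rw [hX x t, h4, hy_t x t, hpzX]
    have hP := hpzzzX
    set P3 := pzzz X (y x t) t
    set Q := pzz (fun x' t' => ((Ψ x' t') ^ 2)⁻¹) x t
    set s := Ψ x t
    set A := (α / m) * Real.exp (m * x)
    set B := (β / m) * Real.exp (-(m * x))
    -- goal : -((1/2)*(Q - (s^2)⁻¹) + A - B) * s⁻¹ = -P3 + (1/2)*(s⁻¹)^3 - s⁻¹*(A-B)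
    have hP3 : P3 = (1 / 2) * Q * s⁻¹ := by
      field_simp at hP ⊢
      linarith
    rw [hP3]
    field_simp
    ring
  refine ⟨main, fun x t => ?_⟩
  have h1 := main x (-t)
  have hptZ : pt (fun y' t' => X y' (-t')) (y x (-t)) t = -(pt X (y x (-t)) (-t)) := by
    show deriv (fun t' => X (y x (-t)) (-t')) t = -(deriv (fun t' => X (y x (-t)) t') (-t))
    exact deriv_comp_neg (fun t' => X (y x (-t)) t') t
  show pt (fun y' t' => X y' (-t')) (y x (-t)) t =
      pzzz X (y x (-t)) (-t) - (1 / 2) * (pz X (y x (-t)) (-t)) ^ 3 +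
        pz X (y x (-t)) (-t) *
          ((α / m) * Real.exp (m * X (y x (-t)) (-t)) -
            (β / m) * Real.exp (-(m * X (y x (-t)) (-t))))
  rw [hptZ]
  linarith [h1]

end
end

section
/- Let v₀, w_{m₀}, L₀ be real numbers with v₀ > w_{m₀} > 0 and L₀ > 0. For each h₀ > 0 let γ(h₀) > 0 be the unique positive real number satisfying (2·v₀·h₀ − L₀·γ(h₀))·exp(−γ(h₀)²) = (w_{m₀} + L₀·γ(h₀)²)·(√π·erf(γ(h₀)) + 2·h₀), and let γ* > 0 be the unique positive real number satisfying v₀·exp(−(γ*)²) = L₀·(γ*)² + w_{m₀}. Then γ(h₀) → γ* as h₀ → +∞. -/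
set_option maxHeartbeats 1000000


open Real MeasureTheory Set

noncomputable section

lemma gauss_intble (a b : ℝ) :
    IntervalIntegrable (fun u : ℝ => Real.exp (-u ^ 2)) volume a b :=
  (Real.continuous_exp.comp (by continuity)).intervalIntegrable a b

lemma erf_pos' {x : ℝ} (hx : 0 < x) : 0 < erf x := by
  have hπ : 0 < Real.sqrt π := Real.sqrt_pos.mpr Real.pi_pos
  have h1 : 0 < ∫ u in (0:ℝ)..x, Real.exp (-u ^ 2) :=
    intervalIntegral.intervalIntegral_pos_of_pos_on (gauss_intble 0 x)
      (fun u _ => Real.exp_pos _) hx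
  have : 0 < 2 / Real.sqrt π := by positivity
  exact mul_pos this h1

lemma erf_le' {x : ℝ} (hx : 0 ≤ x) : erf x ≤ 2 / Real.sqrt π * x := by
  have hπ : 0 < Real.sqrt π := Real.sqrt_pos.mpr Real.pi_pos
  have h1 : (∫ u in (0:ℝ)..x, Real.exp (-u ^ 2)) ≤ ∫ u in (0:ℝ)..x, (1:ℝ) := by
    apply intervalIntegral.integral_mono_on hx (gauss_intble 0 x)
      (intervalIntegrable_const)
    intro u _
    rw [show (1:ℝ) = Real.exp 0 by simp]
    exact Real.exp_le_exp.mpr (by nlinarith)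
  have h2 : (∫ u in (0:ℝ)..x, (1:ℝ)) = x := by simp
  rw [h2] at h1
  have : 0 ≤ 2 / Real.sqrt π := by positivity
  calc erf x ≤ 2 / Real.sqrt π * x := by
        unfold erf; exact mul_le_mul_of_nonneg_left h1 this

/-- as the heat-transfer coefficient `h₀ → +∞`, the similarity
coefficient of the Robin problem converges to that of the Dirichlet problem. -/
theorem statement15 (v₀ wm₀ L₀ : ℝ) (h1 : wm₀ < v₀) (h2 : 0 < wm₀) (h3 : 0 < L₀)
    (γ : ℝ → ℝ)
    (hγ : ∀ h₀ > 0, 0 < γ h₀ ∧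
      (2 * v₀ * h₀ - L₀ * γ h₀) * Real.exp (-(γ h₀) ^ 2) =
        (wm₀ + L₀ * (γ h₀) ^ 2) * (Real.sqrt π * erf (γ h₀) + 2 * h₀))
    (hγ_uniq : ∀ h₀ > 0, ∀ γ' : ℝ, 0 < γ' →
      (2 * v₀ * h₀ - L₀ * γ') * Real.exp (-γ' ^ 2) =
        (wm₀ + L₀ * γ' ^ 2) * (Real.sqrt π * erf γ' + 2 * h₀) → γ' = γ h₀)
    (γs : ℝ) (hγs_pos : 0 < γs)
    (hγs : v₀ * Real.exp (-γs ^ 2) = L₀ * γs ^ 2 + wm₀)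
    (hγs_uniq : ∀ γ' : ℝ, 0 < γ' →
      v₀ * Real.exp (-γ' ^ 2) = L₀ * γ' ^ 2 + wm₀ → γ' = γs) :
    Filter.Tendsto γ Filter.atTop (nhds γs) := by
  have hπ : 0 < Real.sqrt π := Real.sqrt_pos.mpr Real.pi_pos
  have hv : 0 < v₀ := lt_trans h2 h1
  set g : ℝ → ℝ := fun x => v₀ * Real.exp (-x ^ 2) - L₀ * x ^ 2 - wm₀ with hgdef
  have gmono : ∀ a b : ℝ, 0 ≤ a → a < b → g b < g a := by
    intro a b ha hab
    have he : Real.exp (-b ^ 2) < Real.exp (-a ^ 2) :=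
      Real.exp_lt_exp.mpr (by nlinarith)
    have hsq : a ^ 2 < b ^ 2 := by nlinarith
    simp only [hgdef]
    have t1 := mul_lt_mul_of_pos_left he hv
    have t2 := mul_lt_mul_of_pos_left hsq h3
    linarith
  have hgγs : g γs = 0 := by simp only [hgdef]; linarith
  -- key identity
  have key : ∀ h₀ > 0, 2 * h₀ * g (γ h₀) =
      L₀ * γ h₀ * Real.exp (-(γ h₀) ^ 2)
        + (wm₀ + L₀ * (γ h₀) ^ 2) * (Real.sqrt π * erf (γ h₀)) := by
    intro h₀ hh
    obtain ⟨hpos, heq⟩ := hγ h₀ hh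
    simp only [hgdef]
    linear_combination heq
  have gpos : ∀ h₀ > 0, 0 < g (γ h₀) := by
    intro h₀ hh
    obtain ⟨hpos, _⟩ := hγ h₀ hh
    have hE : 0 < erf (γ h₀) := erf_pos' hpos
    have he : 0 < Real.exp (-(γ h₀) ^ 2) := Real.exp_pos _
    have hk := key h₀ hh
    have hr : 0 < L₀ * γ h₀ * Real.exp (-(γ h₀) ^ 2)
        + (wm₀ + L₀ * (γ h₀) ^ 2) * (Real.sqrt π * erf (γ h₀)) :=
      add_pos (mul_pos (mul_pos h3 hpos) he)
        (mul_pos (by positivity) (mul_pos hπ hE))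
    have hpos2 : 0 < 2 * h₀ * g (γ h₀) := hk ▸ hr
    nlinarith [hpos2, hh]
  have hlt : ∀ h₀ > 0, γ h₀ < γs := by
    intro h₀ hh
    by_contra hnot
    push_neg at hnot
    rcases eq_or_lt_of_le hnot with h | h
    · have := gpos h₀ hh; rw [h] at hgγs; linarith
    · have := gmono γs (γ h₀) (le_of_lt hγs_pos) h
      have := gpos h₀ hh
      linarith
  -- bound
  set C : ℝ := L₀ * γs + (wm₀ + L₀ * γs ^ 2) * (2 * γs) with hCdef
  have hCpos : 0 < C := by positivity
  have bound : ∀ h₀ > 0, 2 * h₀ * g (γ h₀) ≤ C := by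
    intro h₀ hh
    obtain ⟨hpos, _⟩ := hγ h₀ hh
    have hxlt := hlt h₀ hh
    have he1 : Real.exp (-(γ h₀) ^ 2) ≤ 1 := by
      rw [show (1:ℝ) = Real.exp 0 by simp]
      exact Real.exp_le_exp.mpr (by nlinarith)
    have he0 : 0 < Real.exp (-(γ h₀) ^ 2) := Real.exp_pos _
    have hE1 : erf (γ h₀) ≤ 2 / Real.sqrt π * γ h₀ := erf_le' (le_of_lt hpos)
    have hE2 : Real.sqrt π * erf (γ h₀) ≤ 2 * γs := by
      have h4 : Real.sqrt π * (2 / Real.sqrt π * γ h₀) = 2 * γ h₀ := by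
        field_simp
      nlinarith [mul_le_mul_of_nonneg_left hE1 (le_of_lt hπ)]
    have hE0 : 0 < erf (γ h₀) := erf_pos' hpos
    have hk := key h₀ hh
    rw [hk, hCdef]
    have hxe : γ h₀ * Real.exp (-(γ h₀) ^ 2) ≤ γs := by
      nlinarith [mul_le_mul hxlt.le he1 he0.le hγs_pos.le]
    have t1 : L₀ * γ h₀ * Real.exp (-(γ h₀) ^ 2) ≤ L₀ * γs := by
      have := mul_le_mul_of_nonneg_left hxe h3.le
      nlinarith
    have hab : wm₀ + L₀ * (γ h₀) ^ 2 ≤ wm₀ + L₀ * γs ^ 2 := by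
      have hsq := mul_le_mul hxlt.le hxlt.le hpos.le hγs_pos.le
      nlinarith [mul_le_mul_of_nonneg_left hsq h3.le]
    have t2 : (wm₀ + L₀ * (γ h₀) ^ 2) * (Real.sqrt π * erf (γ h₀))
        ≤ (wm₀ + L₀ * γs ^ 2) * (2 * γs) :=
      mul_le_mul hab hE2 (mul_pos hπ hE0).le (by nlinarith)
    linarith
  rw [Metric.tendsto_atTop]
  intro ε hε
  by_cases hc : γs ≤ ε
  · refine ⟨1, fun h₀ hh => ?_⟩
    have hh0 : (0:ℝ) < h₀ := by linarith
    obtain ⟨hpos, _⟩ := hγ h₀ hh0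
    have h9 := hlt h₀ hh0
    rw [Real.dist_eq, abs_lt]
    constructor <;> linarith only [hpos, h9, hc, hε]
  · push_neg at hc
    have ha : 0 < γs - ε := by linarith
    have hδ : 0 < g (γs - ε) := by
      have := gmono (γs - ε) γs (le_of_lt ha) (by linarith)
      linarith
    refine ⟨max 1 (C / (2 * g (γs - ε)) + 1), fun h₀ hh => ?_⟩
    have hh1 : (1:ℝ) ≤ h₀ := le_trans (le_max_left _ _) hh
    have hh0 : (0:ℝ) < h₀ := by linarith
    have hh2 : C / (2 * g (γs - ε)) + 1 ≤ h₀ := le_trans (le_max_right _ _) hh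
    obtain ⟨hpos, _⟩ := hγ h₀ hh0
    have hxlt := hlt h₀ hh0
    -- g (γ h₀) < g (γs - ε)
    have hglt : g (γ h₀) < g (γs - ε) := by
      have hb := bound h₀ hh0
      have h5 : C / (2 * g (γs - ε)) < h₀ := by linarith
      have h6 : C < h₀ * (2 * g (γs - ε)) := by
        rw [div_lt_iff₀ (by positivity)] at h5; linarith
      have h7 : h₀ * (2 * g (γs - ε)) = 2 * h₀ * g (γs - ε) := by ring
      by_contra hn
      push_neg at hn
      have h8 := mul_le_mul_of_nonneg_left hn (by linarith : (0:ℝ) ≤ 2 * h₀)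
      linarith
    have hxgt : γs - ε < γ h₀ := by
      by_contra hnot
      push_neg at hnot
      rcases eq_or_lt_of_le hnot with h | h
      · rw [h] at hglt; linarith
      · have := gmono (γ h₀) (γs - ε) (le_of_lt hpos) h
        linarith
    rw [Real.dist_eq, abs_lt]
    constructor <;> linarith only [hxgt, hxlt, hε]

end
end
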